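/- Let G be a connected multigraph and let H(u,v) be a gadget. If r ≠ 1 is a complex root of Rel(G;q), then every complex solution z of the equation spRel_{u,v}(H;z) = (r/(1−r)) · Rel(H;z) is either a root of Rel(G[H(u,v)];q) or a root of Rel(H;q). -/

import Mathlib

open Polynomial

/-- A finite loopless multigraph: a finite vertex type, a finite edge type, and an
incidence map sending each edge to the (unordered) pair of its two distinct endpoints. -/
structure Multigraph where
  V : Type
  E : Type
  [fintypeV : Fintype V]
  [decEqV : DecidableEq V]
  [fintypeE : Fintype E]
  [decEqE : DecidableEq E]
  ends : E → Sym2 V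
  loopless : ∀ e, ¬ (ends e).IsDiag

attribute [instance] Multigraph.fintypeV Multigraph.decEqV Multigraph.fintypeE Multigraph.decEqE

namespace Multigraph

/-- The simple graph on `G.V` in which `x` and `y` are adjacent exactly when some edge
of the subset `S` joins them.  (A multigraph spanning subgraph `(V, S)` is connected
iff this simple graph is connected.) -/
def spanningGraph (G : Multigraph) (S : Set G.E) : SimpleGraph G.V where
  Adj x y := x ≠ y ∧ ∃ e ∈ S, G.ends e = s(x, y)
  symm := by
    constructor
    rintro x y ⟨hxy, e, he, h⟩
    exact ⟨hxy.symm, e, he, by rw [h, Sym2.eq_swap]⟩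
  loopless := by constructor; rintro x ⟨hx, -⟩; exact hx rfl

/-- Connectedness of a multigraph. -/
def Connected (G : Multigraph) : Prop := (G.spanningGraph Set.univ).Connected

open scoped Classical in
/-- The all-terminal reliability polynomial of `G`, in the variable `q = X`:
`Rel(G;q) = Σ_{E' ⊆ E, (V,E') connected} (1-q)^{|E'|} q^{|E|-|E'|}`. -/
noncomputable def Rel (G : Multigraph) : Polynomial ℂ :=
  ∑ S : Finset G.E, if (G.spanningGraph ↑S).Connected then
    (1 - X) ^ S.card * X ^ (Fintype.card G.E - S.card) else 0

/-- The condition that the spanning subgraph `(V, S)` has exactly two connected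
components, one containing `u` and the other containing `v`: equivalently, `u` and `v`
cannot communicate, and every vertex can communicate with `u` or with `v`. -/
def SplitState (G : Multigraph) (u v : G.V) (S : Set G.E) : Prop :=
  ¬ (G.spanningGraph S).Reachable u v ∧
    ∀ w : G.V, (G.spanningGraph S).Reachable w u ∨ (G.spanningGraph S).Reachable w v

open scoped Classical in
/-- The `{u,v}`-split reliability polynomial of `G`, in the variable `q = X`. -/
noncomputable def spRel (G : Multigraph) (u v : G.V) : Polynomial ℂ :=
  ∑ S : Finset G.E, if G.SplitState u v ↑S then
    (1 - X) ^ S.card * X ^ (Fintype.card G.E - S.card) else 0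

/-- The condition that every connected component of the spanning subgraph `(V, S)`
contains exactly one vertex of `K`. -/
def SplitStateSet (G : Multigraph) (K : Set G.V) (S : Set G.E) : Prop :=
  ∀ w : G.V, ∃! x : G.V, x ∈ K ∧ (G.spanningGraph S).Reachable w x

open scoped Classical in
/-- The `K`-split reliability polynomial of `G`, in the variable `q = X`. -/
noncomputable def spRelSet (G : Multigraph) (K : Set G.V) : Polynomial ℂ :=
  ∑ S : Finset G.E, if G.SplitStateSet K ↑S then
    (1 - X) ^ S.card * X ^ (Fintype.card G.E - S.card) else 0

open scoped Classical in
/-- `F i` = the number of `i`-subsets of edges whose removal leaves `G` connected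
(the F-vector of the cographic matroid of `G`). -/
noncomputable def Fnum (G : Multigraph) (i : ℕ) : ℕ :=
  (Finset.univ.filter fun S : Finset G.E =>
    S.card = i ∧ (G.spanningGraph ↑(Finset.univ \ S)).Connected).card

/-- `G` is `k`-edge-connected: it is connected and remains connected after deleting
any set of fewer than `k` edges. -/
def EdgeConnected (G : Multigraph) (k : ℕ) : Prop :=
  G.Connected ∧ ∀ D : Finset G.E, D.card < k → (G.spanningGraph {e | e ∉ (D : Set G.E)}).Connected

/-- `G` is 2-connected: connected, at least 3 vertices, and deleting any single vertex
leaves it connected. -/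
def TwoConnected (G : Multigraph) : Prop :=
  G.Connected ∧ 3 ≤ Fintype.card G.V ∧
    ∀ v : G.V, ((G.spanningGraph Set.univ).induce {w : G.V | w ≠ v}).Connected

/-- The (induced) subgraph of `G` on a set `B` of vertices is connected and has no
cut vertex. -/
def NoCutVertex (G : Multigraph) (B : Set G.V) : Prop :=
  ((G.spanningGraph Set.univ).induce B).Connected ∧
    ∀ v ∈ B, ((G.spanningGraph Set.univ).induce (B \ {v})).Connected

/-- `B` is the vertex set of a block of `G`: a maximal subgraph with no cut vertex
(equivalently, a maximal 2-connected subgraph or a bridge together with its endpoints). -/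
def IsBlock (G : Multigraph) (B : Set G.V) : Prop :=
  G.NoCutVertex B ∧ ∀ C : Set G.V, B ⊆ C → G.NoCutVertex C → C = B

/-- Build a multigraph from a symmetric multiplicity function on unordered pairs. -/
def ofWeight (V : Type) [Fintype V] [DecidableEq V] (w : Sym2 V → ℕ)
    (hw : ∀ p : Sym2 V, p.IsDiag → w p = 0) : Multigraph where
  V := V
  E := Σ p : Sym2 V, Fin (w p)
  ends e := e.1
  loopless := by
    rintro ⟨p, i⟩ h
    rw [hw p h] at i
    exact i.elim0

/-- The complete graph on `n` vertices. -/
def completeGraph (n : ℕ) : Multigraph :=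
  ofWeight (Fin n) (fun p => if p.IsDiag then 0 else 1) (by intro p hp; simp [hp])

/-- `completeMinus n` is the complete graph on `n + 2` vertices minus the edge joining
the vertices `0` and `1`; that is, it is `K_{n+2}^-`, with `u = 0` and `v = 1` its
unique nonadjacent pair of vertices. -/
def completeMinus (n : ℕ) : Multigraph :=
  ofWeight (Fin (n + 2))
    (fun p => if p.IsDiag ∨ p = s((0 : Fin (n + 2)), 1) then 0 else 1)
    (by intro p hp; simp [hp])

/-- The multiplicity function of `G_{m,n}^{a,b}`: `a` parallel edges inside each part,
`b` parallel edges across, no loops. -/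
def gWeight (m n a b : ℕ) : Sym2 (Fin m ⊕ Fin n) → ℕ :=
  Sym2.lift ⟨fun x y => if x = y then 0 else if x.isLeft = y.isLeft then a else b, by
    intro x y
    by_cases h : x = y
    · simp [h]
    · have h' : y ≠ x := fun hh => h hh.symm
      have hl : (x.isLeft = y.isLeft) = (y.isLeft = x.isLeft) := propext ⟨Eq.symm, Eq.symm⟩
      simp only [if_neg h, if_neg h', hl]⟩

/-- The multigraph `G_{m,n}^{a,b}`: disjoint complete graphs `K_m` and `K_n` with each
edge replaced by `a` parallel edges, and every pair of vertices in different parts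
joined by `b` parallel edges. -/
def Gmnab (m n a b : ℕ) : Multigraph :=
  ofWeight (Fin m ⊕ Fin n) (gWeight m n a b) (by
    intro p hp
    induction p using Sym2.ind with
    | _ x y =>
      rw [Sym2.mk_isDiag_iff] at hp
      simp [gWeight, Sym2.lift_mk, hp])

/-- Replace every edge of `G` by a bundle of `k` parallel edges. -/
def bundle (G : Multigraph) (k : ℕ) : Multigraph where
  V := G.V
  E := G.E × Fin k
  ends e := G.ends e.1
  loopless e := G.loopless e.1

/-- The vertex map used in an edge substitution: the endpoints `u`, `v` of the gadget
are identified with the two ends (given by the orientation `ori`) of the edge `e`, and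
the internal vertices of the gadget get their own private copies. -/
def subVertex (G H : Multigraph) (u v : H.V) (ori : G.E → G.V × G.V) (e : G.E)
    (x : H.V) : G.V ⊕ (G.E × {x : H.V // x ≠ u ∧ x ≠ v}) :=
  if hx : x = u then Sum.inl (ori e).1
  else if hx' : x = v then Sum.inl (ori e).2
  else Sum.inr (e, ⟨x, hx, hx'⟩)

/-- The edge substitution `G[H(u,v)]` determined by the orientation `ori` of the edges
of `G`: every edge `{x,y}` of `G` is replaced by a copy of `H`, identifying `u` with
`x` and `v` with `y`. -/
def edgeSub (G H : Multigraph) (u v : H.V) (ori : G.E → G.V × G.V)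
    (hori : ∀ e, s((ori e).1, (ori e).2) = G.ends e) : Multigraph where
  V := G.V ⊕ (G.E × {x : H.V // x ≠ u ∧ x ≠ v})
  E := G.E × H.E
  ends f := (H.ends f.2).map (subVertex G H u v ori f.1)
  loopless := by
    rintro ⟨e, f⟩ h
    have hne : (ori e).1 ≠ (ori e).2 := by
      have hd := G.loopless e
      rw [← hori e, Sym2.mk_isDiag_iff] at hd
      exact hd
    have hinj : Function.Injective (subVertex G H u v ori e) := by
      intro x y hxy
      unfold subVertex at hxy
      split_ifs at hxy <;> simp_all
    rw [Sym2.isDiag_map hinj] at h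
    exact H.loopless f h

/-- The disjoint union of a finite family of multigraphs. -/
def disjUnion {k : ℕ} (H : Fin k → Multigraph) : Multigraph where
  V := Σ i, (H i).V
  E := Σ i, (H i).E
  ends e := ((H e.1).ends e.2).map (Sigma.mk e.1)
  loopless := by
    rintro ⟨i, e⟩ h
    rw [Sym2.isDiag_map sigma_mk_injective] at h
    exact (H i).loopless e h

end Multigraph

namespace Multigraph

/-- The first vertex (`u`) of the unique nonadjacent pair of `completeMinus n`. -/
def cmU (n : ℕ) : (completeMinus n).V := (0 : Fin (n + 2))

/-- The second vertex (`v`) of the unique nonadjacent pair of `completeMinus n`. -/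
def cmV (n : ℕ) : (completeMinus n).V := (1 : Fin (n + 2))

end Multigraph

namespace Multigraph

section EdgeSubSplit

open scoped Classical

variable {G Hg : Multigraph} {u v : Hg.V} {ori : G.E → G.V × G.V}

/-- The fiber of an edge set of `G[H(u,v)]` over an edge of `G`. -/
noncomputable def fib (G Hg : Multigraph) (S : Finset (G.E × Hg.E)) (e : G.E) :
    Finset Hg.E :=
  Finset.univ.filter fun f => (e, f) ∈ S

lemma mem_fib {S : Finset (G.E × Hg.E)} {e : G.E} {f : Hg.E} :
    f ∈ fib G Hg S e ↔ (e, f) ∈ S := by simp [fib]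

lemma ori_ne (hori : ∀ e, s((ori e).1, (ori e).2) = G.ends e) (e : G.E) :
    (ori e).1 ≠ (ori e).2 := by
  have hd := G.loopless e
  rw [← hori e, Sym2.mk_isDiag_iff] at hd
  exact hd

lemma sv_inj (hori : ∀ e, s((ori e).1, (ori e).2) = G.ends e) (e : G.E) :
    Function.Injective (subVertex G Hg u v ori e) := by
  have hne := ori_ne hori e
  intro x y hxy
  unfold subVertex at hxy
  split_ifs at hxy <;> simp_all

lemma sv_u (e : G.E) : subVertex G Hg u v ori e u = Sum.inl (ori e).1 := by
  simp [subVertex]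

lemma sv_v (huv : u ≠ v) (e : G.E) :
    subVertex G Hg u v ori e v = Sum.inl (ori e).2 := by
  simp [subVertex, huv.symm]

lemma sv_w (e : G.E) (w : {x : Hg.V // x ≠ u ∧ x ≠ v}) :
    subVertex G Hg u v ori e w.1 = Sum.inr (e, w) := by
  obtain ⟨w, h1, h2⟩ := w
  simp [subVertex, h1, h2]

lemma sv_eq_inl {e : G.E} {x : Hg.V} {a : G.V}
    (h : subVertex G Hg u v ori e x = Sum.inl a) :
    (x = u ∧ a = (ori e).1) ∨ (x = v ∧ a = (ori e).2) := by
  unfold subVertex at h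
  split_ifs at h with h1 h2
  · exact Or.inl ⟨h1, (Sum.inl.inj h).symm⟩
  · exact Or.inr ⟨h2, (Sum.inl.inj h).symm⟩

lemma sv_eq_inr {e e' : G.E} {x : Hg.V} {w : {x : Hg.V // x ≠ u ∧ x ≠ v}}
    (h : subVertex G Hg u v ori e x = Sum.inr (e', w)) : e = e' ∧ x = w.1 := by
  unfold subVertex at h
  split_ifs at h with h1 h2
  cases h
  exact ⟨rfl, rfl⟩

lemma fib_adj {S : Finset (G.E × Hg.E)} {e : G.E} {f : Hg.E} {x y : Hg.V}
    (hS : f ∈ fib G Hg S e) (hf : Hg.ends f = s(x, y)) (hxy : x ≠ y) :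
    (Hg.spanningGraph ↑(fib G Hg S e)).Adj x y :=
  ⟨hxy, f, Finset.mem_coe.mpr hS, hf⟩

lemma big_adj_elim (hori : ∀ e, s((ori e).1, (ori e).2) = G.ends e)
    {S : Finset (G.E × Hg.E)} {a b : (edgeSub G Hg u v ori hori).V}
    (h : ((edgeSub G Hg u v ori hori).spanningGraph
      (↑S : Set (G.E × Hg.E))).Adj a b) :
    ∃ (e : G.E) (f : Hg.E) (x y : Hg.V), f ∈ fib G Hg S e ∧ Hg.ends f = s(x, y) ∧
      x ≠ y ∧ subVertex G Hg u v ori e x = a ∧ subVertex G Hg u v ori e y = b := by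
  obtain ⟨hab, p, hp, hends⟩ := h
  obtain ⟨e, f⟩ := p
  have hrep : ∃ x y, Hg.ends f = s(x, y) := by
    induction Hg.ends f using Sym2.ind with
    | _ x y => exact ⟨x, y, rfl⟩
  obtain ⟨x, y, hf⟩ := hrep
  have hxy : x ≠ y := by
    have hd := Hg.loopless f
    rw [hf, Sym2.mk_isDiag_iff] at hd
    exact hd
  have hmap : Sym2.map (subVertex G Hg u v ori e) (Hg.ends f) = s(a, b) := hends
  rw [hf, Sym2.map_pair_eq] at hmap
  have hmem : f ∈ fib G Hg S e := mem_fib.mpr hp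
  rcases Sym2.eq_iff.mp hmap with ⟨h1, h2⟩ | ⟨h1, h2⟩
  · exact ⟨e, f, x, y, hmem, hf, hxy, h1, h2⟩
  · exact ⟨e, f, y, x, hmem, by rw [hf, Sym2.eq_swap], hxy.symm, h2, h1⟩

lemma big_adj_intro (hori : ∀ e, s((ori e).1, (ori e).2) = G.ends e)
    {S : Finset (G.E × Hg.E)} {e : G.E} {f : Hg.E} {x y : Hg.V}
    (hS : f ∈ fib G Hg S e) (hf : Hg.ends f = s(x, y)) (hxy : x ≠ y) :
    ((edgeSub G Hg u v ori hori).spanningGraph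
      (↑S : Set (G.E × Hg.E))).Adj
      (subVertex G Hg u v ori e x) (subVertex G Hg u v ori e y) := by
  refine ⟨fun h => hxy (sv_inj hori e h), ⟨e, f⟩, Finset.mem_coe.mpr (mem_fib.mp hS), ?_⟩
  have hm : Sym2.map (subVertex G Hg u v ori e) (Hg.ends f)
      = s(subVertex G Hg u v ori e x, subVertex G Hg u v ori e y) := by
    rw [hf, Sym2.map_pair_eq]
  exact hm

lemma fib_reach_lift (hori : ∀ e, s((ori e).1, (ori e).2) = G.ends e)
    {S : Finset (G.E × Hg.E)} {e : G.E} {x y : Hg.V}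
    (h : (Hg.spanningGraph ↑(fib G Hg S e)).Reachable x y) :
    ((edgeSub G Hg u v ori hori).spanningGraph
      (↑S : Set (G.E × Hg.E))).Reachable
      (subVertex G Hg u v ori e x) (subVertex G Hg u v ori e y) := by
  refine SimpleGraph.Reachable.map ⟨subVertex G Hg u v ori e, ?_⟩ h
  rintro a b ⟨hab, f, hfS, hends⟩
  exact big_adj_intro hori (Finset.mem_coe.mp hfS) hends hab

lemma connected_of_reach_two {V : Type} {Γ : SimpleGraph V} {a b : V}
    (hall : ∀ w, Γ.Reachable w a ∨ Γ.Reachable w b) (hab : Γ.Reachable a b) :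
    Γ.Connected := by
  refine (SimpleGraph.connected_iff _).mpr ⟨fun x y => ?_, ⟨a⟩⟩
  have hx := (hall x).elim id fun h => h.trans hab.symm
  have hy := (hall y).elim id fun h => h.trans hab.symm
  exact hx.trans hy.symm

lemma reach_term_of_walk (hori : ∀ e, s((ori e).1, (ori e).2) = G.ends e)
    {S : Finset (G.E × Hg.E)} {a b : (edgeSub G Hg u v ori hori).V}
    (p : ((edgeSub G Hg u v ori hori).spanningGraph (↑S : Set (G.E × Hg.E))).Walk a b) :
    ∀ {e : G.E} {w : {x : Hg.V // x ≠ u ∧ x ≠ v}}, a = Sum.inr (e, w) →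
      ∀ {c : G.V}, b = Sum.inl c →
      (Hg.spanningGraph ↑(fib G Hg S e)).Reachable w.1 u ∨
      (Hg.spanningGraph ↑(fib G Hg S e)).Reachable w.1 v := by
  induction p with
  | nil =>
    rintro e w rfl c hc
    simp at hc
  | @cons a' m b' h q ih =>
    rintro e w rfl c rfl
    obtain ⟨e', f, x, y, hS, hf, hxy, hxa, hyb⟩ := big_adj_elim hori h
    obtain ⟨he, hx⟩ := sv_eq_inr hxa
    subst he; subst hx
    cases m with
    | inl x0 =>
      rcases sv_eq_inl hyb with ⟨rfl, -⟩ | ⟨rfl, -⟩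
      · exact Or.inl (fib_adj hS hf hxy).reachable
      · exact Or.inr (fib_adj hS hf hxy).reachable
    | inr pr =>
      obtain ⟨e2, w2⟩ := pr
      obtain ⟨he2, hy⟩ := sv_eq_inr hyb
      subst he2; subst hy
      rcases ih rfl rfl with hr | hr
      · exact Or.inl ((fib_adj hS hf hxy).reachable.trans hr)
      · exact Or.inr ((fib_adj hS hf hxy).reachable.trans hr)

/-- Membership predicate: to which vertices of `G` a vertex of `G[H(u,v)]` projects. -/
def pmem (G Hg : Multigraph) (u v : Hg.V) (ori : G.E → G.V × G.V)
    (S : Finset (G.E × Hg.E)) :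
    (G.V ⊕ (G.E × {x : Hg.V // x ≠ u ∧ x ≠ v})) → G.V → Prop
  | Sum.inl x, x' => x' = x
  | Sum.inr (e, w), x' =>
      (x' = (ori e).1 ∧ (Hg.spanningGraph ↑(fib G Hg S e)).Reachable w.1 u) ∨
      (x' = (ori e).2 ∧ (Hg.spanningGraph ↑(fib G Hg S e)).Reachable w.1 v)

/-- The set of edges of `G` whose fiber is connected. -/
noncomputable def connFibers (G Hg : Multigraph) (S : Finset (G.E × Hg.E)) :
    Finset G.E :=
  Finset.univ.filter fun e => (Hg.spanningGraph ↑(fib G Hg S e)).Connected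

lemma mem_connFibers {S : Finset (G.E × Hg.E)} {e : G.E} :
    e ∈ connFibers G Hg S ↔ (Hg.spanningGraph ↑(fib G Hg S e)).Connected := by
  simp [connFibers]

section Pmem

variable (hori : ∀ e, s((ori e).1, (ori e).2) = G.ends e) {S : Finset (G.E × Hg.E)}
  (hall : ∀ (e : G.E) (w : Hg.V),
    (Hg.spanningGraph ↑(fib G Hg S e)).Reachable w u ∨
    (Hg.spanningGraph ↑(fib G Hg S e)).Reachable w v)

include hori hall

lemma R_of_two {e : G.E} {zv : Hg.V}
    (h1 : (Hg.spanningGraph ↑(fib G Hg S e)).Reachable zv u)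
    (h2 : (Hg.spanningGraph ↑(fib G Hg S e)).Reachable zv v) :
    (G.spanningGraph ↑(connFibers G Hg S)).Reachable (ori e).1 (ori e).2 := by
  have hc : (Hg.spanningGraph ↑(fib G Hg S e)).Connected :=
    connected_of_reach_two (hall e) (h1.symm.trans h2)
  exact SimpleGraph.Adj.reachable
    ⟨ori_ne hori e, e, Finset.mem_coe.mpr (mem_connFibers.mpr hc), (hori e).symm⟩

lemma pmem_sv {e : G.E} {zv : Hg.V} {x' : G.V}
    (h : pmem G Hg u v ori S (subVertex G Hg u v ori e zv) x') :
    (x' = (ori e).1 ∧ (Hg.spanningGraph ↑(fib G Hg S e)).Reachable zv u) ∨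
    (x' = (ori e).2 ∧ (Hg.spanningGraph ↑(fib G Hg S e)).Reachable zv v) := by
  unfold subVertex at h
  split_ifs at h with h1 h2
  · subst h1; exact Or.inl ⟨h, SimpleGraph.Reachable.refl _⟩
  · subst h2; exact Or.inr ⟨h, SimpleGraph.Reachable.refl _⟩
  · exact h

lemma pmem_same {a : (edgeSub G Hg u v ori hori).V} {x y : G.V}
    (ha : pmem G Hg u v ori S a x) (hb : pmem G Hg u v ori S a y) :
    (G.spanningGraph ↑(connFibers G Hg S)).Reachable x y := by
  cases a with
  | inl x0 =>
    have hx : x = x0 := ha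
    have hy : y = x0 := hb
    subst hx; subst hy; exact SimpleGraph.Reachable.refl _
  | inr pr =>
    obtain ⟨e, w⟩ := pr
    rcases ha with ⟨rfl, h1⟩ | ⟨rfl, h1⟩ <;> rcases hb with ⟨rfl, h2⟩ | ⟨rfl, h2⟩
    · exact SimpleGraph.Reachable.refl _
    · exact R_of_two hori hall h1 h2
    · exact (R_of_two hori hall h2 h1).symm
    · exact SimpleGraph.Reachable.refl _

lemma pmem_adj {a b : (edgeSub G Hg u v ori hori).V} {x y : G.V}
    (h : ((edgeSub G Hg u v ori hori).spanningGraph (↑S : Set (G.E × Hg.E))).Adj a b)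
    (ha : pmem G Hg u v ori S a x) (hb : pmem G Hg u v ori S b y) :
    (G.spanningGraph ↑(connFibers G Hg S)).Reachable x y := by
  obtain ⟨e, f, xh, yh, hS, hf, hxy, hxa, hyb⟩ := big_adj_elim hori h
  subst hxa; subst hyb
  have had := (fib_adj hS hf hxy).reachable
  rcases pmem_sv hori hall ha with ⟨rfl, h1⟩ | ⟨rfl, h1⟩ <;>
    rcases pmem_sv hori hall hb with ⟨rfl, h2⟩ | ⟨rfl, h2⟩
  · exact SimpleGraph.Reachable.refl _
  · exact R_of_two hori hall h1 (had.trans h2)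
  · exact (R_of_two hori hall h2 (had.symm.trans h1)).symm
  · exact SimpleGraph.Reachable.refl _

lemma pmem_exists (a : (edgeSub G Hg u v ori hori).V) :
    ∃ x, pmem G Hg u v ori S a x := by
  cases a with
  | inl x => exact ⟨x, rfl⟩
  | inr pr =>
    obtain ⟨e, w⟩ := pr
    rcases hall e w.1 with h | h
    · exact ⟨(ori e).1, Or.inl ⟨rfl, h⟩⟩
    · exact ⟨(ori e).2, Or.inr ⟨rfl, h⟩⟩

lemma pmem_walk {a b : (edgeSub G Hg u v ori hori).V}
    (p : ((edgeSub G Hg u v ori hori).spanningGraph (↑S : Set (G.E × Hg.E))).Walk a b) :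
    ∀ {x y : G.V}, pmem G Hg u v ori S a x → pmem G Hg u v ori S b y →
      (G.spanningGraph ↑(connFibers G Hg S)).Reachable x y := by
  induction p with
  | nil => exact fun ha hb => pmem_same hori hall ha hb
  | @cons a' m b' h q ih =>
    intro x y ha hb
    obtain ⟨x', hx'⟩ := pmem_exists hori hall m
    exact (pmem_adj hori hall h ha hx').trans (ih hx' hb)

end Pmem

lemma big_connected_iff (hGne : Nonempty G.V) (huv : u ≠ v)
    (hori : ∀ e, s((ori e).1, (ori e).2) = G.ends e) (S : Finset (G.E × Hg.E)) :
    ((edgeSub G Hg u v ori hori).spanningGraph (↑S : Set (G.E × Hg.E))).Connected ↔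
      (∀ (e : G.E) (w : Hg.V),
          (Hg.spanningGraph ↑(fib G Hg S e)).Reachable w u ∨
          (Hg.spanningGraph ↑(fib G Hg S e)).Reachable w v) ∧
        (G.spanningGraph ↑(connFibers G Hg S)).Connected := by
  obtain ⟨x0⟩ := hGne
  constructor
  · intro hc
    have hall : ∀ (e : G.E) (w : Hg.V),
        (Hg.spanningGraph ↑(fib G Hg S e)).Reachable w u ∨
        (Hg.spanningGraph ↑(fib G Hg S e)).Reachable w v := by
      intro e w
      by_cases h1 : w = u
      · exact Or.inl (h1 ▸ SimpleGraph.Reachable.refl _)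
      by_cases h2 : w = v
      · exact Or.inr (h2 ▸ SimpleGraph.Reachable.refl _)
      obtain ⟨p⟩ := hc.preconnected (Sum.inr (e, ⟨w, h1, h2⟩)) (Sum.inl x0)
      exact reach_term_of_walk hori p rfl rfl
    refine ⟨hall, (SimpleGraph.connected_iff _).mpr ⟨fun x y => ?_, ⟨x0⟩⟩⟩
    obtain ⟨p⟩ := hc.preconnected (Sum.inl x) (Sum.inl y)
    exact pmem_walk hori hall p rfl rfl
  · rintro ⟨hall, hcon⟩
    have key : ∀ x : G.V,
        ((edgeSub G Hg u v ori hori).spanningGraph (↑S : Set (G.E × Hg.E))).Reachable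
          (Sum.inl x) (Sum.inl x0) := by
      intro x
      obtain ⟨p⟩ := hcon.preconnected x x0
      induction p with
      | nil => exact SimpleGraph.Reachable.refl _
      | @cons a m b h q ih =>
        obtain ⟨hne, e, heC, hends⟩ := h
        have hcf : (Hg.spanningGraph ↑(fib G Hg S e)).Connected :=
          mem_connFibers.mp (Finset.mem_coe.mp heC)
        have hr := fib_reach_lift (u := u) (v := v) (hori := hori) (S := S) (hcf.preconnected u v)
        rw [sv_u, sv_v huv] at hr
        have hor : s((ori e).1, (ori e).2) = s(a, m) := by rw [hori e, hends]
        have hstep : ((edgeSub G Hg u v ori hori).spanningGraph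
            (↑S : Set (G.E × Hg.E))).Reachable (Sum.inl a) (Sum.inl m) := by
          rcases Sym2.eq_iff.mp hor with ⟨h1, h2⟩ | ⟨h1, h2⟩
          · rw [h1, h2] at hr; exact hr
          · rw [h1, h2] at hr; exact hr.symm
        exact hstep.trans ih
    have hto : ∀ a : (edgeSub G Hg u v ori hori).V,
        ((edgeSub G Hg u v ori hori).spanningGraph (↑S : Set (G.E × Hg.E))).Reachable
          a (Sum.inl x0) := by
      intro a
      cases a with
      | inl x => exact key x
      | inr pr =>
        obtain ⟨e, w⟩ := pr
        rcases hall e w.1 with h | h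
        · have hr := fib_reach_lift (u := u) (v := v) (hori := hori) (S := S) h
          rw [sv_w, sv_u] at hr
          exact hr.trans (key _)
        · have hr := fib_reach_lift (u := u) (v := v) (hori := hori) (S := S) h
          rw [sv_w, sv_v huv] at hr
          exact hr.trans (key _)
    exact (SimpleGraph.connected_iff _).mpr
      ⟨fun a b => (hto a).trans (hto b).symm, ⟨Sum.inl x0⟩⟩

lemma good_iff (T : Finset Hg.E) :
    ((Hg.spanningGraph ↑T).Connected ∨ Hg.SplitState u v ↑T) ↔
      ∀ w, (Hg.spanningGraph ↑T).Reachable w u ∨ (Hg.spanningGraph ↑T).Reachable w v := by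
  constructor
  · rintro (hc | hs) w
    · exact Or.inl (hc.preconnected w u)
    · exact hs.2 w
  · intro hall
    by_cases hruv : (Hg.spanningGraph ↑T).Reachable u v
    · exact Or.inl (connected_of_reach_two hall hruv)
    · exact Or.inr ⟨hruv, hall⟩

lemma conn_not_split {T : Finset Hg.E} (hc : (Hg.spanningGraph ↑T).Connected) :
    ¬ Hg.SplitState u v ↑T := fun hs => hs.1 (hc.preconnected u v)

lemma eval_Rel (G : Multigraph) (z : ℂ) :
    G.Rel.eval z = ∑ S : Finset G.E,
      if (G.spanningGraph ↑S).Connected then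
        (1 - z) ^ S.card * z ^ (Fintype.card G.E - S.card) else 0 := by
  rw [Rel, eval_finset_sum]
  refine Finset.sum_congr rfl fun S _ => ?_
  split_ifs with h <;> simp

lemma eval_spRel (Hg : Multigraph) (u v : Hg.V) (z : ℂ) :
    (Hg.spRel u v).eval z = ∑ T : Finset Hg.E,
      if Hg.SplitState u v ↑T then
        (1 - z) ^ T.card * z ^ (Fintype.card Hg.E - T.card) else 0 := by
  rw [spRel, eval_finset_sum]
  refine Finset.sum_congr rfl fun S _ => ?_
  split_ifs with h <;> simp

noncomputable def fnEquiv (G Hg : Multigraph) :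
    (G.E → Finset Hg.E) ≃ Finset (G.E × Hg.E) where
  toFun f := Finset.univ.filter fun p => p.2 ∈ f p.1
  invFun S := fib G Hg S
  left_inv f := by funext e; ext g; simp [fib]
  right_inv S := by ext p; simp [fib]

lemma fib_fnEquiv (f : G.E → Finset Hg.E) (e : G.E) :
    fib G Hg (fnEquiv G Hg f) e = f e :=
  congrFun ((fnEquiv G Hg).left_inv f) e

lemma connFibers_fnEquiv (f : G.E → Finset Hg.E) :
    connFibers G Hg (fnEquiv G Hg f) =
      Finset.univ.filter fun e => (Hg.spanningGraph ↑(f e)).Connected := by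
  unfold connFibers
  refine Finset.filter_congr fun e _ => ?_
  rw [fib_fnEquiv]

lemma card_eq_sum_fib (S : Finset (G.E × Hg.E)) :
    S.card = ∑ e : G.E, (fib G Hg S e).card := by
  rw [Finset.card_eq_sum_card_fiberwise (f := fun p : G.E × Hg.E => p.1)
    (t := Finset.univ) (fun x _ => Finset.mem_univ x.1)]
  refine Finset.sum_congr rfl fun e _ => ?_
  refine Finset.card_bij (fun p _ => p.2) ?_ ?_ ?_
  · rintro ⟨e', g⟩ hp
    rw [Finset.mem_filter] at hp
    obtain ⟨h1, h2⟩ := hp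
    cases h2
    exact mem_fib.mpr h1
  · rintro ⟨e1, g1⟩ h1 ⟨e2, g2⟩ h2 hgg
    rw [Finset.mem_filter] at h1 h2
    exact Prod.ext_iff.mpr ⟨h1.2.trans h2.2.symm, hgg⟩
  · intro g hg
    exact ⟨(e, g), Finset.mem_filter.mpr ⟨mem_fib.mp hg, rfl⟩, rfl⟩

lemma weight_prod (S : Finset (G.E × Hg.E)) (z : ℂ) :
    (1 - z) ^ S.card * z ^ (Fintype.card G.E * Fintype.card Hg.E - S.card) =
      ∏ e : G.E, ((1 - z) ^ (fib G Hg S e).card *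
        z ^ (Fintype.card Hg.E - (fib G Hg S e).card)) := by
  have h1 : ∑ e : G.E, (fib G Hg S e).card = S.card := (card_eq_sum_fib S).symm
  have h2 : ∑ e : G.E, (Fintype.card Hg.E - (fib G Hg S e).card)
      = Fintype.card G.E * Fintype.card Hg.E - S.card := by
    rw [Finset.sum_tsub_distrib _ (fun e _ => Finset.card_le_univ _), h1,
      Finset.sum_const, smul_eq_mul, Finset.card_univ]
  rw [Finset.prod_mul_distrib, Finset.prod_pow_eq_pow_sum, Finset.prod_pow_eq_pow_sum,
    h1, h2]

end EdgeSubSplit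

end Multigraph

namespace Multigraph

/-- Let `G` be a connected multigraph and `H(u,v)` a gadget.  If
`r ≠ 1` is a complex root of `Rel(G;q)`, then every complex solution `z` of
`spRel_{u,v}(H;z) = (r/(1-r))·Rel(H;z)` is a root of `Rel(G[H(u,v)];q)` or a root of
`Rel(H;q)`. -/
theorem root_edgeSub_of_split (G Hg : Multigraph) (hG : G.Connected)
    (hH : Hg.Connected) (hcard : 2 ≤ Fintype.card Hg.V) (u v : Hg.V) (huv : u ≠ v)
    (ori : G.E → G.V × G.V) (hori : ∀ e, s((ori e).1, (ori e).2) = G.ends e)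
    (r : ℂ) (hr : r ≠ 1) (hroot : G.Rel.eval r = 0)
    (z : ℂ) (hz : (Hg.spRel u v).eval z = (r / (1 - r)) * Hg.Rel.eval z) :
    (edgeSub G Hg u v ori hori).Rel.eval z = 0 ∨ Hg.Rel.eval z = 0 := by
  classical
  left
  have hGne : Nonempty G.V := ((SimpleGraph.connected_iff _).mp hG).2
  have h1r : (1 : ℂ) - r ≠ 0 := sub_ne_zero.mpr fun h => hr h.symm
  have hcardE : Fintype.card (edgeSub G Hg u v ori hori).E
      = Fintype.card G.E * Fintype.card Hg.E := Fintype.card_prod _ _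
  -- Step 1: expand the reliability of the edge substitution fiberwise.
  have step1 : (edgeSub G Hg u v ori hori).Rel.eval z =
      ∑ S : Finset (G.E × Hg.E),
        if ((∀ (e : G.E) (w : Hg.V),
              (Hg.spanningGraph ↑(fib G Hg S e)).Reachable w u ∨
              (Hg.spanningGraph ↑(fib G Hg S e)).Reachable w v) ∧
            (G.spanningGraph ↑(connFibers G Hg S)).Connected)
        then ∏ e : G.E, ((1 - z) ^ (fib G Hg S e).card *
            z ^ (Fintype.card Hg.E - (fib G Hg S e).card)) else 0 := by
    rw [eval_Rel]
    refine Finset.sum_congr rfl fun S _ => ?_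
    rw [hcardE]
    exact if_congr (big_connected_iff hGne huv hori S) (weight_prod S z) rfl
  -- Step 2: reindex by functions from edges of `G` to edge sets of `Hg`.
  have step2 : (edgeSub G Hg u v ori hori).Rel.eval z =
      ∑ f : G.E → Finset Hg.E,
        if ((∀ e : G.E, (Hg.spanningGraph ↑(f e)).Connected ∨ Hg.SplitState u v ↑(f e)) ∧
            (G.spanningGraph ↑(Finset.univ.filter fun e =>
              (Hg.spanningGraph ↑(f e)).Connected)).Connected)
        then ∏ e : G.E, ((1 - z) ^ (f e).card *
            z ^ (Fintype.card Hg.E - (f e).card)) else 0 := by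
    rw [step1, ← Equiv.sum_comp (fnEquiv G Hg)]
    refine Finset.sum_congr rfl fun f _ => ?_
    refine if_congr (and_congr ?_ ?_)
      (Finset.prod_congr rfl fun e _ => by rw [fib_fnEquiv]) rfl
    · exact forall_congr' fun e => by rw [fib_fnEquiv]; exact (good_iff (f e)).symm
    · rw [connFibers_fnEquiv]
  -- Step 3: group by the set of connected fibers.
  have hA := eval_Rel Hg z
  have hBs := eval_spRel Hg u v z
  have step3 : (edgeSub G Hg u v ori hori).Rel.eval z =
      ∑ D : Finset G.E, if (G.spanningGraph ↑D).Connected then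
        (Hg.Rel.eval z) ^ D.card *
          ((Hg.spRel u v).eval z) ^ (Fintype.card G.E - D.card) else 0 := by
    rw [step2, ← Finset.sum_fiberwise Finset.univ
      (fun f : G.E → Finset Hg.E =>
        Finset.univ.filter fun e => (Hg.spanningGraph ↑(f e)).Connected)]
    refine Finset.sum_congr rfl fun D _ => ?_
    rw [Finset.sum_filter]
    by_cases hD : (G.spanningGraph ↑D).Connected
    · rw [if_pos hD]
      have hterm : ∀ f : G.E → Finset Hg.E,
          (if (Finset.univ.filter fun e => (Hg.spanningGraph ↑(f e)).Connected) = D then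
            (if ((∀ e : G.E, (Hg.spanningGraph ↑(f e)).Connected ∨
                  Hg.SplitState u v ↑(f e)) ∧
                (G.spanningGraph ↑(Finset.univ.filter fun e =>
                  (Hg.spanningGraph ↑(f e)).Connected)).Connected)
            then ∏ e : G.E, ((1 - z) ^ (f e).card *
                z ^ (Fintype.card Hg.E - (f e).card)) else 0) else 0)
          = ∏ e : G.E,
              (if (e ∈ D ∧ (Hg.spanningGraph ↑(f e)).Connected) ∨
                  (e ∉ D ∧ Hg.SplitState u v ↑(f e)) then
                ((1 - z) ^ (f e).card * z ^ (Fintype.card Hg.E - (f e).card)) else 0) := by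
        intro f
        by_cases hfD :
            (Finset.univ.filter fun e => (Hg.spanningGraph ↑(f e)).Connected) = D
        · rw [if_pos hfD]
          by_cases hg : ∀ e : G.E,
              (Hg.spanningGraph ↑(f e)).Connected ∨ Hg.SplitState u v ↑(f e)
          · rw [if_pos ⟨hg, by rw [hfD]; exact hD⟩]
            refine Finset.prod_congr rfl fun e _ => ?_
            have hconn : e ∈ D ↔ (Hg.spanningGraph ↑(f e)).Connected := by
              rw [← hfD]; simp
            by_cases he : e ∈ D
            · rw [if_pos (Or.inl ⟨he, hconn.mp he⟩)]
            · rw [if_pos (Or.inr ⟨he, ((hg e).resolve_left fun hc =>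
                he (hconn.mpr hc))⟩)]
          · rw [if_neg fun hc => hg hc.1]
            obtain ⟨e, he⟩ := not_forall.mp hg
            refine (Finset.prod_eq_zero (Finset.mem_univ e) ?_).symm
            rw [if_neg]
            rintro (⟨-, hc⟩ | ⟨-, hs⟩)
            · exact he (Or.inl hc)
            · exact he (Or.inr hs)
        · rw [if_neg hfD]
          have : ∃ e : G.E, ¬ (e ∈ D ↔ (Hg.spanningGraph ↑(f e)).Connected) := by
            by_contra hall
            push_neg at hall
            exact hfD (by ext e; simp [(hall e).symm])
          obtain ⟨e, he⟩ := this
          refine (Finset.prod_eq_zero (Finset.mem_univ e) ?_).symm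
          rw [if_neg]
          rintro (⟨heD, hc⟩ | ⟨heD, hs⟩)
          · exact he (iff_of_true heD hc)
          · exact he (iff_of_false heD fun hc => conn_not_split hc hs)
      rw [Finset.sum_congr rfl fun f _ => hterm f]
      have hps := Finset.prod_univ_sum
        (fun _ : G.E => (Finset.univ : Finset (Finset Hg.E)))
        (fun e T => if (e ∈ D ∧ (Hg.spanningGraph ↑T).Connected) ∨
            (e ∉ D ∧ Hg.SplitState u v ↑T) then
          ((1 - z) ^ T.card * z ^ (Fintype.card Hg.E - T.card)) else 0)
      rw [Fintype.piFinset_univ] at hps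
      have hfac : ∀ e : G.E,
          (∑ T : Finset Hg.E, if (e ∈ D ∧ (Hg.spanningGraph ↑T).Connected) ∨
              (e ∉ D ∧ Hg.SplitState u v ↑T) then
            ((1 - z) ^ T.card * z ^ (Fintype.card Hg.E - T.card)) else 0)
          = if e ∈ D then Hg.Rel.eval z else (Hg.spRel u v).eval z := by
        intro e
        by_cases he : e ∈ D
        · rw [if_pos he, hA]
          refine Finset.sum_congr rfl fun T _ => ?_
          refine if_congr ⟨?_, fun h => Or.inl ⟨he, h⟩⟩ rfl rfl
          rintro (⟨-, h⟩ | ⟨hne, -⟩)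
          · exact h
          · exact absurd he hne
        · rw [if_neg he, hBs]
          refine Finset.sum_congr rfl fun T _ => ?_
          refine if_congr ⟨?_, fun h => Or.inr ⟨he, h⟩⟩ rfl rfl
          rintro (⟨heD, -⟩ | ⟨-, h⟩)
          · exact absurd heD he
          · exact h
      have c1 : (Finset.univ.filter fun e : G.E => e ∈ D).card = D.card := by simp
      have c2 : (Finset.univ.filter fun e : G.E => ¬ e ∈ D).card
          = Fintype.card G.E - D.card := by
        simp [Finset.filter_not, Finset.card_sdiff_of_subset (Finset.subset_univ D)]
      calc (∑ f : G.E → Finset Hg.E, ∏ e : G.E,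
              (if (e ∈ D ∧ (Hg.spanningGraph ↑(f e)).Connected) ∨
                  (e ∉ D ∧ Hg.SplitState u v ↑(f e)) then
                ((1 - z) ^ (f e).card *
                  z ^ (Fintype.card Hg.E - (f e).card)) else 0))
          = ∏ e : G.E, ∑ T : Finset Hg.E,
              (if (e ∈ D ∧ (Hg.spanningGraph ↑T).Connected) ∨
                  (e ∉ D ∧ Hg.SplitState u v ↑T) then
                ((1 - z) ^ T.card * z ^ (Fintype.card Hg.E - T.card)) else 0) := hps.symm
        _ = ∏ e : G.E, (if e ∈ D then Hg.Rel.eval z else (Hg.spRel u v).eval z) :=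
              Finset.prod_congr rfl fun e _ => hfac e
        _ = (Hg.Rel.eval z) ^ D.card *
              ((Hg.spRel u v).eval z) ^ (Fintype.card G.E - D.card) := by
              rw [Finset.prod_ite, Finset.prod_const, Finset.prod_const, c1, c2]
    · rw [if_neg hD]
      refine Finset.sum_eq_zero fun f _ => ?_
      by_cases hfD :
          (Finset.univ.filter fun e => (Hg.spanningGraph ↑(f e)).Connected) = D
      · rw [if_pos hfD, if_neg]
        rintro ⟨-, hcon⟩
        exact hD (by rwa [hfD] at hcon)
      · rw [if_neg hfD]
  -- Final algebraic step.
  have key : ∀ k : ℕ, k ≤ Fintype.card G.E →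
      (1 - r) ^ Fintype.card G.E *
          ((Hg.Rel.eval z) ^ k *
            ((Hg.spRel u v).eval z) ^ (Fintype.card G.E - k))
        = (Hg.Rel.eval z) ^ Fintype.card G.E *
            ((1 - r) ^ k * r ^ (Fintype.card G.E - k)) := by
    intro k hk
    rw [hz]
    have e1 : (1 - r) ^ Fintype.card G.E
        = (1 - r) ^ k * (1 - r) ^ (Fintype.card G.E - k) := by
      rw [← pow_add, Nat.add_sub_cancel' hk]
    have e2 : (Hg.Rel.eval z) ^ Fintype.card G.E
        = (Hg.Rel.eval z) ^ k * (Hg.Rel.eval z) ^ (Fintype.card G.E - k) := by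
      rw [← pow_add, Nat.add_sub_cancel' hk]
    calc (1 - r) ^ Fintype.card G.E * ((Hg.Rel.eval z) ^ k *
            ((r / (1 - r)) * Hg.Rel.eval z) ^ (Fintype.card G.E - k))
        = ((Hg.Rel.eval z) ^ k * (Hg.Rel.eval z) ^ (Fintype.card G.E - k)) *
            ((1 - r) ^ k *
              (((r / (1 - r)) * (1 - r)) ^ (Fintype.card G.E - k))) := by
          rw [e1, mul_pow, mul_pow]; ring
      _ = (Hg.Rel.eval z) ^ Fintype.card G.E *
            ((1 - r) ^ k * r ^ (Fintype.card G.E - k)) := by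
          rw [div_mul_cancel₀ r h1r, e2]
  have hfin : (1 - r) ^ Fintype.card G.E *
      (edgeSub G Hg u v ori hori).Rel.eval z = 0 := by
    rw [step3, Finset.mul_sum]
    have hterm : ∀ D : Finset G.E,
        (1 - r) ^ Fintype.card G.E *
            (if (G.spanningGraph ↑D).Connected then
              (Hg.Rel.eval z) ^ D.card *
                ((Hg.spRel u v).eval z) ^ (Fintype.card G.E - D.card) else 0)
          = (Hg.Rel.eval z) ^ Fintype.card G.E *
              (if (G.spanningGraph ↑D).Connected then
                (1 - r) ^ D.card * r ^ (Fintype.card G.E - D.card) else 0) := by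
      intro D
      by_cases hD : (G.spanningGraph ↑D).Connected
      · rw [if_pos hD, if_pos hD]
        exact key D.card (Finset.card_le_univ D)
      · rw [if_neg hD, if_neg hD, mul_zero, mul_zero]
    rw [Finset.sum_congr rfl fun D _ => hterm D, ← Finset.mul_sum, ← eval_Rel G r,
      hroot, mul_zero]
  rcases mul_eq_zero.mp hfin with h | h
  · exact absurd h (pow_ne_zero _ h1r)
  · exact h

end Multigraph
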